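/- The sets of pure conditional weak tautologies of SAC and of GNW are identical: a pure conditional expression e is a weak SAC tautology if and only if it is a weak GNW tautology. -/
import Mathlib


/-- The three truth values `0`, `1`, `⊥`. -/
inductive Tri : Type
  | zero : Tri
  | one : Tri
  | bot : Tri
deriving DecidableEq

/-- SAC conditioning: `(x |_SAC y) = ⊥` if `y = 0`, and `x` if `y ∈ {1, ⊥}`. -/
def sacCond (x y : Tri) : Tri :=
  match y with
  | .zero => .bot
  | _ => x

/-- GNW conditioning: `(x |_GNW y) = ⊥` if `y = 0`; `= x` if `y = 1`; and for
`y = ⊥` it is `0` if `x = 0` and `⊥` otherwise. -/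
def gnwCond (x y : Tri) : Tri :=
  match y with
  | .zero => .bot
  | .one => x
  | .bot => match x with
    | .zero => .zero
    | _ => .bot

/-- Pure conditional expressions: propositional variables closed under the
binary connective `|` alone. `cond a b` denotes `(a | b)`. -/
inductive PureExpr : Type
  | var : ℕ → PureExpr
  | cond : PureExpr → PureExpr → PureExpr

/-- The SAC value of a pure conditional expression under a 3-valued valuation. -/
def sacEval (v : ℕ → Tri) : PureExpr → Tri
  | .var n => v n
  | .cond a b => sacCond (sacEval v a) (sacEval v b)

/-- The GNW value of a pure conditional expression under a 3-valued valuation. -/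
def gnwEval (v : ℕ → Tri) : PureExpr → Tri
  | .var n => v n
  | .cond a b => gnwCond (gnwEval v a) (gnwEval v b)

lemma sac_zero_iff_gnw_zero (e : PureExpr) (v : ℕ → Tri) :
    sacEval v e = Tri.zero ↔ gnwEval v e = Tri.zero := by
  induction e with
  | var n => simp [sacEval, gnwEval]
  | cond a b iha ihb =>
    simp only [sacEval, gnwEval]
    cases hsa : sacEval v a <;> cases hga : gnwEval v a <;>
      cases hsb : sacEval v b <;> cases hgb : gnwEval v b <;>
      simp_all [sacCond, gnwCond]

/-- The pure conditional weak tautologies of SAC and of GNW coincide. -/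
theorem weak_sac_tautology_iff_weak_gnw_tautology (e : PureExpr) :
    (∀ v : ℕ → Tri, sacEval v e ≠ Tri.zero) ↔ (∀ v : ℕ → Tri, gnwEval v e ≠ Tri.zero) := by
  simp only [ne_eq, sac_zero_iff_gnw_zero]
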